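/- Let p be a prime and work in G = ℤ_p^2. Let K ⊆ H be finite-index additive subgroups of G with the same level. Then for any finite-index additive subgroup H′ of G satisfying K ⊆ H′, Lev(H′) = Lev(H), and [G : H′] = [G : H], one has H′ = H. (In the language of the frame: if T ≤ T′ are finite transitive ℤ_p^2-sets with Lev(T) = Lev(T′), then T is the unique U ≤ T′ with Lev(U) = Lev(T) and #U = #T.) -/

import Mathlib

/-- The subgroup p^n·ℤ_p^2 of ℤ_p^2, i.e. the range of multiplication by p^n. -/
noncomputable def pPowSubgroup (p : ℕ) [Fact p.Prime] (d n : ℕ) :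
    AddSubgroup (Fin d → ℤ_[p]) :=
  (DistribMulAction.toAddMonoidHom (Fin d → ℤ_[p]) ((p : ℤ_[p]) ^ n)).range

/-- The level of an additive subgroup H of ℤ_p^d: the largest n with H ⊆ p^n·ℤ_p^d. -/
noncomputable def level (p : ℕ) [Fact p.Prime] (d : ℕ)
    (H : AddSubgroup (Fin d → ℤ_[p])) : ℕ :=
  sSup {n : ℕ | H ≤ pPowSubgroup p d n}

/-!
A finite-index subgroup of `ℤ_[p]²` is a `ℤ_[p]`-submodule: its index `n` kills the quotient and
every `p`-adic integer is congruent to a natural number modulo `n`. If `K` has level `a`, it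
contains `p ^ a • v` with `v` primitive. The submodules `N` with `p ^ a • v ∈ N ≤ p ^ a • ℤ_[p]²`
are totally ordered: as `v` is primitive, `det (v, x) = 0` forces `x ∈ ℤ_[p] • v`, so whether
`p ^ a • y ∈ N` is decided by divisibility among the values of `det (v, ·)`, and divisibility is
total in `ℤ_[p]`. Hence `H` and `H'` are comparable, and equal indices force `H = H'`.
-/

namespace PadicInt

variable {p : ℕ} [Fact p.Prime]

theorem exists_dvd_sub_natCast (a : ℤ_[p]) {n : ℕ} (hn : n ≠ 0) :
    ∃ m : ℕ, (n : ℤ_[p]) ∣ a - m := by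
  have hn' : (n : ℤ_[p]) ≠ 0 := Nat.cast_ne_zero.mpr hn
  refine ⟨a.appr (n : ℤ_[p]).valuation, ?_⟩
  have hpow : (n : ℤ_[p]) ∣ (p : ℤ_[p]) ^ (n : ℤ_[p]).valuation := by
    conv_lhs => rw [unitCoeff_spec hn']
    exact Units.mul_left_dvd.mpr dvd_rfl
  exact hpow.trans (Ideal.mem_span_singleton.mp (appr_spec _ a))

theorem isCoprime_of_not_dvd_and_dvd {a b : ℤ_[p]} (h : ¬((p : ℤ_[p]) ∣ a ∧ (p : ℤ_[p]) ∣ b)) :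
    IsCoprime a b := by
  have isUnit_of_not_dvd : ∀ {c : ℤ_[p]}, ¬(p : ℤ_[p]) ∣ c → IsUnit c := fun hc =>
    not_not.mp fun hu => hc ((norm_lt_one_iff_dvd _).mp (not_isUnit_iff.mp hu))
  rcases not_and_or.mp h with ha | hb
  · exact isCoprime_one_left.of_isCoprime_of_dvd_left (isUnit_of_not_dvd ha).dvd
  · exact isCoprime_one_right.of_isCoprime_of_dvd_right (isUnit_of_not_dvd hb).dvd

end PadicInt

namespace AddSubgroup

variable {M : Type*} [AddCommGroup M]

theorem eq_of_le_of_index_eq {H K : AddSubgroup M} (hle : H ≤ K) (hH : H.index ≠ 0)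
    (hindex : H.index = K.index) : H = K := by
  have : H.FiniteIndex := ⟨hH⟩
  exact hle.eq_or_lt.resolve_right fun hlt => (index_strictAnti hlt).ne' hindex

variable {p : ℕ} [Fact p.Prime] [Module ℤ_[p] M]

theorem padicInt_smul_mem {H : AddSubgroup M} (hH : H.index ≠ 0) (a : ℤ_[p]) {x : M}
    (hx : x ∈ H) : a • x ∈ H := by
  obtain ⟨m, c, hc⟩ := PadicInt.exists_dvd_sub_natCast a hH
  have ha : a • x = m • x + H.index • (c • x) := by
    rw [← Nat.cast_smul_eq_nsmul ℤ_[p] m, ← Nat.cast_smul_eq_nsmul ℤ_[p] H.index, smul_smul,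
      ← add_smul, ← hc, add_sub_cancel]
  rw [ha]
  exact H.add_mem (H.nsmul_mem hx m) (H.nsmul_index_mem _)

variable (p) in
def toPadicIntSubmodule (H : AddSubgroup M) (hH : H.index ≠ 0) : Submodule ℤ_[p] M where
  toAddSubmonoid := H.toAddSubmonoid
  smul_mem' a _ hx := padicInt_smul_mem hH a hx

end AddSubgroup

section Chain

variable {R : Type*} [CommRing R]

theorem exists_eq_smul_of_isCoprime {v x : Fin 2 → R} (hv : IsCoprime (v 0) (v 1))
    (hx : v 0 * x 1 - v 1 * x 0 = 0) : ∃ s : R, x = s • v := by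
  obtain ⟨a, b, hab⟩ := hv
  refine ⟨a * x 0 + b * x 1, funext (Fin.forall_fin_two.mpr ⟨?_, ?_⟩)⟩
  · simp only [Pi.smul_apply, smul_eq_mul]
    linear_combination (-x 0) * hab - b * hx
  · simp only [Pi.smul_apply, smul_eq_mul]
    linear_combination (-x 1) * hab + a * hx

theorem smul_mem_of_isCoprime_of_dvd {N : Submodule R (Fin 2 → R)} {t : R} {v x y : Fin 2 → R}
    (hv : IsCoprime (v 0) (v 1)) (hvN : t • v ∈ N) (hxN : t • x ∈ N)
    (hxy : v 0 * x 1 - v 1 * x 0 ∣ v 0 * y 1 - v 1 * y 0) : t • y ∈ N := by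
  obtain ⟨c, hc⟩ := hxy
  obtain ⟨s, hs⟩ := exists_eq_smul_of_isCoprime (x := y - c • x) hv (by
    simp only [Pi.sub_apply, Pi.smul_apply, smul_eq_mul]
    linear_combination hc)
  have hy : t • y = c • t • x + s • t • v := by
    rw [← sub_eq_iff_eq_add', ← smul_comm t c, ← smul_sub, hs, smul_comm]
  rw [hy]
  exact N.add_mem (N.smul_mem c hxN) (N.smul_mem s hvN)

variable [PreValuationRing R]

theorem Submodule.le_total_of_isCoprime_smul_mem {t : R} {v : Fin 2 → R}
    (hv : IsCoprime (v 0) (v 1)) {N₁ N₂ : Submodule R (Fin 2 → R)} (h₁ : t • v ∈ N₁)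
    (h₂ : t • v ∈ N₂) (hN₁ : N₁ ≤ LinearMap.range (DistribSMul.toLinearMap R _ t))
    (hN₂ : N₂ ≤ LinearMap.range (DistribSMul.toLinearMap R _ t)) :
    N₁ ≤ N₂ ∨ N₂ ≤ N₁ := by
  by_contra! h
  obtain ⟨⟨_, hx₁, hx₂⟩, ⟨_, hy₂, hy₁⟩⟩ := And.imp SetLike.not_le_iff_exists.mp
    SetLike.not_le_iff_exists.mp h
  obtain ⟨x, rfl⟩ := hN₁ hx₁
  obtain ⟨y, rfl⟩ := hN₂ hy₂
  rcases ValuationRing.dvd_total (v 0 * x 1 - v 1 * x 0) (v 0 * y 1 - v 1 * y 0) with hxy | hyx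
  · exact hy₁ (smul_mem_of_isCoprime_of_dvd hv h₁ hx₁ hxy)
  · exact hx₂ (smul_mem_of_isCoprime_of_dvd hv h₂ hy₂ hyx)

end Chain

section Level

variable {p : ℕ} [Fact p.Prime] {d : ℕ}

theorem mem_pPowSubgroup_iff {n : ℕ} {x : Fin d → ℤ_[p]} :
    x ∈ pPowSubgroup p d n ↔ ∀ i, (p : ℤ_[p]) ^ n ∣ x i := by
  refine ⟨?_, fun h => ?_⟩
  · rintro ⟨y, rfl⟩ i
    exact ⟨y i, rfl⟩
  · choose y hy using h
    exact ⟨y, funext fun i => (hy i).symm⟩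

theorem le_pPowSubgroup_zero (H : AddSubgroup (Fin d → ℤ_[p])) : H ≤ pPowSubgroup p d 0 :=
  fun x _ => ⟨x, one_smul _ x⟩

theorem bddAbove_setOf_le_pPowSubgroup {H : AddSubgroup (Fin d → ℤ_[p])} (hH : H ≠ ⊥) :
    BddAbove {n | H ≤ pPowSubgroup p d n} := by
  obtain ⟨x, hxH, hx⟩ := H.bot_or_exists_ne_zero.resolve_left hH
  obtain ⟨i, hi⟩ := Function.ne_iff.mp hx
  exact ⟨(x i).valuation, fun n hn => (PadicInt.mem_span_pow_iff_le_valuation _ hi n).mp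
    (Ideal.mem_span_singleton.mpr (mem_pPowSubgroup_iff.mp (hn hxH) i))⟩

theorem le_pPowSubgroup_level (H : AddSubgroup (Fin d → ℤ_[p])) :
    H ≤ pPowSubgroup p d (level p d H) := by
  by_cases hbdd : BddAbove {n | H ≤ pPowSubgroup p d n}
  · exact Nat.sSup_mem ⟨0, le_pPowSubgroup_zero H⟩ hbdd
  · rw [level, Nat.sSup_of_not_bddAbove hbdd]
    exact le_pPowSubgroup_zero H

theorem not_le_pPowSubgroup_level_add_one {H : AddSubgroup (Fin d → ℤ_[p])} (hH : H ≠ ⊥) :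
    ¬H ≤ pPowSubgroup p d (level p d H + 1) := fun h =>
  (le_csSup (bddAbove_setOf_le_pPowSubgroup hH) h).not_gt (Nat.lt_succ_self _)

theorem exists_isCoprime_pow_level_smul_mem {K : AddSubgroup (Fin 2 → ℤ_[p])} (hK : K ≠ ⊥) :
    ∃ v : Fin 2 → ℤ_[p], (p : ℤ_[p]) ^ level p 2 K • v ∈ K ∧ IsCoprime (v 0) (v 1) := by
  obtain ⟨_, hxK, hx⟩ := SetLike.not_le_iff_exists.mp (not_le_pPowSubgroup_level_add_one hK)
  obtain ⟨v, rfl⟩ := le_pPowSubgroup_level K hxK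
  refine ⟨v, hxK, PadicInt.isCoprime_of_not_dvd_and_dvd fun hpv => hx ?_⟩
  rw [mem_pPowSubgroup_iff, Fin.forall_fin_two, pow_succ]
  exact ⟨mul_dvd_mul_left _ hpv.1, mul_dvd_mul_left _ hpv.2⟩

end Level

/-- In G = ℤ_p², let K ⊆ H be finite-index additive subgroups with the same level. Then
H is the unique finite-index subgroup H′ ⊇ K with the level of H and the index of H. -/
theorem unique_subgroup_same_level_same_index
    (p : ℕ) [Fact p.Prime]
    (H K : AddSubgroup (Fin 2 → ℤ_[p])) (hH : H.index ≠ 0) (hK : K.index ≠ 0)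
    (hKH : K ≤ H) (hlev : level p 2 K = level p 2 H) :
    ∀ H' : AddSubgroup (Fin 2 → ℤ_[p]), H'.index ≠ 0 → K ≤ H' →
      level p 2 H' = level p 2 H → H'.index = H.index → H' = H := by
  intro H' hH' hKH' hlev' hindex
  have hK_ne_bot : K ≠ ⊥ := fun h => hK <| by
    rw [h, AddSubgroup.index_bot, Nat.card_eq_zero_of_infinite]
  obtain ⟨v, hvK, hv⟩ := exists_isCoprime_pow_level_smul_mem hK_ne_bot
  rw [hlev] at hvK
  rcases Submodule.le_total_of_isCoprime_smul_mem hv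
      (N₁ := H'.toPadicIntSubmodule p hH') (N₂ := H.toPadicIntSubmodule p hH)
      (hKH' hvK) (hKH hvK) (hlev' ▸ le_pPowSubgroup_level H') (le_pPowSubgroup_level H)
    with hle | hle
  · exact AddSubgroup.eq_of_le_of_index_eq hle hH' hindex
  · exact (AddSubgroup.eq_of_le_of_index_eq hle hH hindex.symm).symm
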